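/- (Theorem 2 of the paper: non-stationary ELBO.) Let (Z_c, μ_c), (Z_w, μ_w), (Z_v, μ_v) be measurable spaces each equipped with a σ-finite measure, and let T ∈ ℕ. Let p_c be a probability density on Z_c; for each t ∈ {1,…,T} let p^w_t : Z_w^{t−1} × Z_w → [0,∞) and p^v_t : Z_v^{t−1} × Z_v → [0,∞) be measurable conditional densities normalized in their last argument; let f_t : Z_c × Z_w → [0,∞) and g_t : Z_c × Z_v → [0,∞) be measurable; let q_c be a probability density on Z_c and q^w_t, q^v_t measurable conditional densities normalized in their last argument. On Z_c × Z_w^T × Z_v^T define Q(z_c, w_{1:T}, v_{1:T}) = q_c(z_c)·∏_{t=1}^T q^w_t(w_{<t}, w_t)·q^v_t(v_{<t}, v_t) and G(z_c, w_{1:T}, v_{1:T}) = p_c(z_c)·∏_{t=1}^T p^w_t(w_{<t}, w_t)·p^v_t(v_{<t}, v_t)·f_t(z_c, w_t)·g_t(z_c, v_t), and suppose the marginal likelihood m = ∫ G d(μ_c × μ_w^{⊗T} × μ_v^{⊗T}) satisfies 0 < m < ∞. Assume G > 0 almost everywhere with respect to Q·(μ_c × μ_w^{⊗T} × μ_v^{⊗T}),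 that Q·log(Q/G) is integrable, that for each t the functions Q·log f_t(z_c, w_t) and Q·log g_t(z_c, v_t) are integrable, that q_c·log(q_c/p_c) is integrable, and that for each t the functions (w_{1:t}) ↦ (∏_{s=1}^t q^w_s(w_{<s}, w_s))·log(q^w_t(w_{<t}, w_t)/p^w_t(w_{<t}, w_t)) and the analogous v-functions are integrable. Then log m ≥ Σ_{t=1}^T ∫ Q·( log f_t(z_c, w_t) + log g_t(z_c, v_t) ) − KL(q_c‖p_c) − Σ_{t=1}^T ∫_{Z_w^t} (∏_{s=1}^t q^w_s(w_{<s}, w_s))·log( q^w_t(w_{<t}, w_t)/p^w_t(w_{<t}, w_t) ) dμ_w^{⊗t} − Σ_{t=1}^T ∫_{Z_v^t} (∏_{s=1}^t q^v_s(v_{<s}, v_s))·log( q^v_t(v_{<t}, v_t)/p^v_t(v_{<t}, v_t) ) dμ_v^{⊗t}; that is, the log-likelihood of the observed sequences is bounded below by the LSSAE objective, which is the evidence lower bound of the non-stationary model. -/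

import Mathlib

/-! Gibbs' inequality `∫ Q log (G / (m Q)) ≤ ∫ (G / m - Q) = 0`, a pointwise consequence of
`log x ≤ x - 1`, gives `log m ≥ -∫ Q log (Q / G)` for every probability density `Q`.
Expanding `log (Q / G)` splits the right-hand side into `log (q_c / p_c)`, the per-step
log-ratios of the two chains and the reconstruction terms. The `t`-th chain term depends only
on the first `t + 1` coordinates, so against `Q` the later conditional densities integrate out
to `1` one coordinate at a time (Fubini along the last coordinate), leaving the expected
conditional KL divergence of step `t`. -/

open MeasureTheory

/-- The autoregressive product `∏_{s=1}^n k_s((z_1,…,z_{s-1}), z_s)` of the first `n ≤ T`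
conditional densities of an autoregressive family `k`, evaluated on a history
`z : Fin n → Z` (0-indexed: `k t` has history length `t`). -/
noncomputable def arProdLE {Z : Type*} {T : ℕ}
    (k : (t : Fin T) → (Fin (t : ℕ) → Z) → Z → ℝ)
    {n : ℕ} (hn : n ≤ T) (z : Fin n → Z) : ℝ :=
  ∏ s : Fin n, k ⟨s, lt_of_lt_of_le s.isLt hn⟩ (fun r => z (Fin.castLE s.isLt.le r)) (z s)

/-- The variational posterior density
`Q(z_c, w_{1:T}, v_{1:T}) = q_c(z_c) · ∏_t q^w_t(w_{<t}, w_t) · ∏_t q^v_t(v_{<t}, v_t)`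
of the non-stationary sequential model. -/
noncomputable def seqQ {Zc Zw Zv : Type*} {T : ℕ}
    (qc : Zc → ℝ)
    (qw : (t : Fin T) → (Fin (t : ℕ) → Zw) → Zw → ℝ)
    (qv : (t : Fin T) → (Fin (t : ℕ) → Zv) → Zv → ℝ)
    (z : Zc × (Fin T → Zw) × (Fin T → Zv)) : ℝ :=
  qc z.1 * arProdLE qw (le_refl T) z.2.1 * arProdLE qv (le_refl T) z.2.2

/-- The joint generative density (for fixed observed sequences)
`G(z_c, w_{1:T}, v_{1:T}) = p_c(z_c) · ∏_t p^w_t(w_{<t}, w_t) · p^v_t(v_{<t}, v_t)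
· f_t(z_c, w_t) · g_t(z_c, v_t)` of the non-stationary sequential model. -/
noncomputable def seqG {Zc Zw Zv : Type*} {T : ℕ}
    (pc : Zc → ℝ)
    (pw : (t : Fin T) → (Fin (t : ℕ) → Zw) → Zw → ℝ)
    (pv : (t : Fin T) → (Fin (t : ℕ) → Zv) → Zv → ℝ)
    (f : Fin T → Zc → Zw → ℝ) (g : Fin T → Zc → Zv → ℝ)
    (z : Zc × (Fin T → Zw) × (Fin T → Zv)) : ℝ :=
  pc z.1 * arProdLE pw (le_refl T) z.2.1 * arProdLE pv (le_refl T) z.2.2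
    * (∏ t, f t z.1 (z.2.1 t)) * (∏ t, g t z.1 (z.2.2 t))

structure IsCondDensity {H Z : Type*} [MeasurableSpace H] [MeasurableSpace Z]
    (μ : Measure Z) (κ : H → Z → ℝ) : Prop where
  measurable : Measurable (Function.uncurry κ)
  nonneg : ∀ h z, 0 ≤ κ h z
  integral_eq_one : ∀ h, ∫ z, κ h z ∂μ = 1

namespace IsCondDensity

variable {H Z : Type*} [MeasurableSpace H] [MeasurableSpace Z] {μ : Measure Z} [SigmaFinite μ]
  {κ : H → Z → ℝ} {π : Measure H} [SigmaFinite π] {C : H → ℝ}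

theorem integrable_prod_mul (hκ : IsCondDensity μ κ) (hC : Integrable C π) :
    Integrable (fun p : Z × H => κ p.2 p.1 * C p.2) (μ.prod π) := by
  have hmeas : AEStronglyMeasurable (fun p : Z × H => κ p.2 p.1 * C p.2) (μ.prod π) :=
    (hκ.measurable.comp measurable_swap).aestronglyMeasurable.mul
      hC.aestronglyMeasurable.comp_snd
  refine (integrable_prod_iff' hmeas).2 ⟨ae_of_all _ fun h => ?_, ?_⟩
  · exact (integrable_of_integral_eq_one (hκ.integral_eq_one h)).mul_const (C h)
  · have hslice : ∀ h, ∫ z, ‖κ h z * C h‖ ∂μ = ‖C h‖ := fun h => by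
      simp_rw [norm_mul, Real.norm_of_nonneg (hκ.nonneg h _)]
      rw [integral_mul_const, hκ.integral_eq_one h, one_mul]
    simpa only [hslice] using hC.norm

theorem integral_prod_mul (hκ : IsCondDensity μ κ) (hC : Integrable C π) :
    ∫ p : Z × H, κ p.2 p.1 * C p.2 ∂(μ.prod π) = ∫ h, C h ∂π := by
  rw [integral_prod_symm _ (hκ.integrable_prod_mul hC)]
  simp_rw [integral_mul_const, hκ.integral_eq_one, one_mul]

end IsCondDensity

section arProdLE

variable {Z : Type*} {T : ℕ} {k : (t : Fin T) → (Fin (t : ℕ) → Z) → Z → ℝ}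

theorem arProdLE_nonneg (hk : ∀ t h z, 0 ≤ k t h z) {n : ℕ} (hn : n ≤ T) (z : Fin n → Z) :
    0 ≤ arProdLE k hn z :=
  Finset.prod_nonneg fun _ _ => hk _ _ _

theorem arProdLE_succ {m : ℕ} (hm : m + 1 ≤ T) (z : Fin (m + 1) → Z) :
    arProdLE k hm z
      = arProdLE k (Nat.le_of_succ_le hm) (Fin.init z)
        * k ⟨m, hm⟩ (Fin.init z) (z (Fin.last m)) := by
  rw [arProdLE, Fin.prod_univ_castSucc]
  rfl

variable [MeasurableSpace Z] {μ : Measure Z} [SigmaFinite μ]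

theorem arProdLE_succ_mul_init_eq {m : ℕ} (hm : m + 1 ≤ T) (C : (Fin m → Z) → ℝ) :
    (fun z : Fin (m + 1) → Z => arProdLE k hm z * C (Fin.init z))
      = (fun p : Z × (Fin m → Z) =>
          k ⟨m, hm⟩ p.2 p.1 * (arProdLE k (Nat.le_of_succ_le hm) p.2 * C p.2))
        ∘ MeasurableEquiv.piFinSuccAbove (fun _ => Z) (Fin.last m) := by
  funext z
  simp only [Function.comp_apply, MeasurableEquiv.piFinSuccAbove_apply,
    Fin.insertNthEquiv_symm_apply, Fin.removeNth_last, arProdLE_succ hm z]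
  ring

theorem integrable_arProdLE_succ_mul_init (hk : ∀ t, IsCondDensity μ (k t)) {m : ℕ}
    (hm : m + 1 ≤ T) {C : (Fin m → Z) → ℝ}
    (hC : Integrable (fun z => arProdLE k (Nat.le_of_succ_le hm) z * C z)
      (Measure.pi fun _ => μ)) :
    Integrable (fun z => arProdLE k hm z * C (Fin.init z)) (Measure.pi fun _ => μ) := by
  rw [arProdLE_succ_mul_init_eq hm C,
    (measurePreserving_piFinSuccAbove (fun _ => μ) (Fin.last m)).integrable_comp_emb
      (MeasurableEquiv.measurableEmbedding _)]
  exact (hk _).integrable_prod_mul (C := fun w => arProdLE k _ w * C w) hC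

theorem integral_arProdLE_succ_mul_init (hk : ∀ t, IsCondDensity μ (k t)) {m : ℕ}
    (hm : m + 1 ≤ T) {C : (Fin m → Z) → ℝ}
    (hC : Integrable (fun z => arProdLE k (Nat.le_of_succ_le hm) z * C z)
      (Measure.pi fun _ => μ)) :
    ∫ z, arProdLE k hm z * C (Fin.init z) ∂(Measure.pi fun _ => μ)
      = ∫ z, arProdLE k (Nat.le_of_succ_le hm) z * C z ∂(Measure.pi fun _ => μ) := by
  rw [arProdLE_succ_mul_init_eq hm C]
  exact ((measurePreserving_piFinSuccAbove (fun _ => μ) (Fin.last m)).integral_comp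
      (MeasurableEquiv.measurableEmbedding _) _).trans
    ((hk _).integral_prod_mul (C := fun w => arProdLE k _ w * C w) hC)

theorem integrable_arProdLE_mul_take (hk : ∀ t, IsCondDensity μ (k t)) {n m : ℕ}
    (hnm : n ≤ m) (hm : m ≤ T) {F : (Fin n → Z) → ℝ}
    (hF : Integrable (fun z => arProdLE k (hnm.trans hm) z * F z) (Measure.pi fun _ => μ)) :
    Integrable (fun z => arProdLE k hm z * F (Fin.take n hnm z)) (Measure.pi fun _ => μ) := by
  induction m, hnm using Nat.le_induction with
  | base => simpa only [Fin.take_eq_self] using hF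
  | succ m hnm ih =>
    exact integrable_arProdLE_succ_mul_init hk hm (ih (Nat.le_of_succ_le hm) hF)

theorem integral_arProdLE_mul_take (hk : ∀ t, IsCondDensity μ (k t)) {n m : ℕ}
    (hnm : n ≤ m) (hm : m ≤ T) {F : (Fin n → Z) → ℝ}
    (hF : Integrable (fun z => arProdLE k (hnm.trans hm) z * F z) (Measure.pi fun _ => μ)) :
    ∫ z, arProdLE k hm z * F (Fin.take n hnm z) ∂(Measure.pi fun _ => μ)
      = ∫ z, arProdLE k (hnm.trans hm) z * F z ∂(Measure.pi fun _ => μ) := by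
  induction m, hnm using Nat.le_induction with
  | base => simp only [Fin.take_eq_self]
  | succ m hnm ih =>
    have hm' := Nat.le_of_succ_le hm
    exact (integral_arProdLE_succ_mul_init hk hm
      (integrable_arProdLE_mul_take hk hnm hm' hF)).trans (ih hm' hF)

theorem integral_arProdLE (hk : ∀ t, IsCondDensity μ (k t)) {n : ℕ} (hn : n ≤ T) :
    ∫ z, arProdLE k hn z ∂(Measure.pi fun _ => μ) = 1 := by
  have : IsProbabilityMeasure (Measure.pi fun _ : Fin 0 => μ) := by
    rw [Measure.pi_of_empty]
    infer_instance
  simpa [arProdLE] using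
    integral_arProdLE_mul_take hk (Nat.zero_le n) hn (F := fun _ => 1) (by simp [arProdLE])

end arProdLE

section Product

variable {A B C : Type*} [MeasurableSpace A] [MeasurableSpace B] [MeasurableSpace C]
  {μ : Measure A} {ν : Measure B} {ρ : Measure C} {a : A → ℝ} {b : B → ℝ} {c : C → ℝ}

theorem integrable_prod_mul₃ (ha : Integrable a μ) (hb : Integrable b ν)
    (hc : Integrable c ρ) :
    Integrable (fun z : A × B × C => a z.1 * b z.2.1 * c z.2.2) (μ.prod (ν.prod ρ)) := by
  simpa only [mul_assoc] using ha.mul_prod (hb.mul_prod hc)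

theorem integral_prod_mul₃ [SFinite μ] [SFinite ν] [SFinite ρ] (a : A → ℝ) (b : B → ℝ)
    (c : C → ℝ) :
    ∫ z : A × B × C, a z.1 * b z.2.1 * c z.2.2 ∂(μ.prod (ν.prod ρ))
      = (∫ x, a x ∂μ) * (∫ y, b y ∂ν) * (∫ w, c w ∂ρ) := by
  simp_rw [mul_assoc]
  rw [integral_prod_mul (f := a) (g := fun y : B × C => b y.1 * c y.2), integral_prod_mul]

end Product

theorem neg_mul_log_div_le {q g m : ℝ} (hq : 0 ≤ q) (hg : 0 ≤ g) (hqg : 0 < q → 0 < g)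
    (hm : 0 < m) : -(q * Real.log (q / g)) ≤ q * Real.log m + (g / m - q) := by
  rcases hq.eq_or_lt with rfl | hq
  · simpa using div_nonneg hg hm.le
  have hg := hqg hq
  have key := mul_le_mul_of_nonneg_left
    (Real.log_le_sub_one_of_pos (div_pos hg (mul_pos hm hq))) hq.le
  rw [Real.log_div hg.ne' (mul_pos hm hq).ne', Real.log_mul hm.ne' hq.ne'] at key
  have hrhs : q * (g / (m * q) - 1) = g / m - q := by field_simp
  rw [Real.log_div hq.ne' hg.ne']
  linarith

/-- Gibbs' inequality for `q` against the normalised density `g / ∫ g`. -/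
theorem neg_integral_mul_log_div_le_log_integral {α : Type*} [MeasurableSpace α] {ν : Measure α}
    {q g : α → ℝ} (hq : 0 ≤ᵐ[ν] q) (hq_one : ∫ x, q x ∂ν = 1) (hg : 0 ≤ᵐ[ν] g)
    (hg_pos : 0 < ∫ x, g x ∂ν) (hqg : ∀ᵐ x ∂ν, 0 < q x → 0 < g x)
    (hint : Integrable (fun x => q x * Real.log (q x / g x)) ν) :
    -∫ x, q x * Real.log (q x / g x) ∂ν ≤ Real.log (∫ x, g x ∂ν) := by
  set m := ∫ x, g x ∂ν
  have hq_int : Integrable q ν := integrable_of_integral_eq_one hq_one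
  have hg_int : Integrable g ν := .of_integral_ne_zero hg_pos.ne'
  have hgq_int : Integrable (fun x => g x / m - q x) ν := (hg_int.div_const m).sub hq_int
  calc -∫ x, q x * Real.log (q x / g x) ∂ν = ∫ x, -(q x * Real.log (q x / g x)) ∂ν :=
        (integral_neg _).symm
    _ ≤ ∫ x, q x * Real.log m + (g x / m - q x) ∂ν := by
        refine integral_mono_ae hint.neg ((hq_int.mul_const _).add hgq_int) ?_
        filter_upwards [hq, hg, hqg] with x hqx hgx hqgx
        exact neg_mul_log_div_le hqx hgx hqgx hg_pos
    _ = Real.log m := by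
        rw [integral_add (hq_int.mul_const _) hgq_int,
          integral_sub (hg_int.div_const m) hq_int, integral_mul_const, integral_div, hq_one,
          div_self hg_pos.ne']
        ring

noncomputable def condLogRatio {Z : Type*} {T : ℕ}
    (q p : (t : Fin T) → (Fin (t : ℕ) → Z) → Z → ℝ) (t : Fin T)
    (y : Fin ((t : ℕ) + 1) → Z) : ℝ :=
  Real.log (q t (fun r => y r.castSucc) (y (Fin.last _)) /
    p t (fun r => y r.castSucc) (y (Fin.last _)))

section Chain

variable {Z : Type*} {T : ℕ} {q p : (t : Fin T) → (Fin (t : ℕ) → Z) → Z → ℝ}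

theorem log_arProdLE_div {z : Fin T → Z} (hq : arProdLE q le_rfl z ≠ 0)
    (hp : arProdLE p le_rfl z ≠ 0) :
    Real.log (arProdLE q le_rfl z / arProdLE p le_rfl z)
      = ∑ t : Fin T, condLogRatio q p t (Fin.take _ t.isLt z) := by
  rw [arProdLE, arProdLE, ← Finset.prod_div_distrib, Real.log_prod]
  · rfl
  · exact fun s _ => div_ne_zero (Finset.prod_ne_zero_iff.1 hq s (Finset.mem_univ s))
      (Finset.prod_ne_zero_iff.1 hp s (Finset.mem_univ s))

variable [MeasurableSpace Z] {μ : Measure Z} [SigmaFinite μ]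

theorem integrable_arProdLE_mul_sum_condLogRatio (hq : ∀ t, IsCondDensity μ (q t))
    (hkl : ∀ t : Fin T, Integrable (fun y => arProdLE q t.isLt y * condLogRatio q p t y)
      (Measure.pi fun _ => μ)) :
    Integrable
      (fun z => arProdLE q le_rfl z * ∑ t : Fin T, condLogRatio q p t (Fin.take _ t.isLt z))
      (Measure.pi fun _ => μ) := by
  simp_rw [Finset.mul_sum]
  exact integrable_finsetSum _ fun t _ => integrable_arProdLE_mul_take hq t.isLt le_rfl (hkl t)

theorem integral_arProdLE_mul_sum_condLogRatio (hq : ∀ t, IsCondDensity μ (q t))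
    (hkl : ∀ t : Fin T, Integrable (fun y => arProdLE q t.isLt y * condLogRatio q p t y)
      (Measure.pi fun _ => μ)) :
    ∫ z, arProdLE q le_rfl z * ∑ t : Fin T, condLogRatio q p t (Fin.take _ t.isLt z)
        ∂(Measure.pi fun _ => μ)
      = ∑ t : Fin T,
          ∫ y, arProdLE q t.isLt y * condLogRatio q p t y ∂(Measure.pi fun _ => μ) := by
  simp_rw [Finset.mul_sum]
  rw [integral_finsetSum _ fun t _ => integrable_arProdLE_mul_take hq t.isLt le_rfl (hkl t)]
  exact Finset.sum_congr rfl fun t _ => integral_arProdLE_mul_take hq t.isLt le_rfl (hkl t)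

end Chain

section Model

variable {Zc Zw Zv : Type*} {T : ℕ} {pc qc : Zc → ℝ}
  {pw qw : (t : Fin T) → (Fin (t : ℕ) → Zw) → Zw → ℝ}
  {pv qv : (t : Fin T) → (Fin (t : ℕ) → Zv) → Zv → ℝ}
  {f : Fin T → Zc → Zw → ℝ} {g : Fin T → Zc → Zv → ℝ}

theorem seqQ_nonneg (hqc : ∀ z, 0 ≤ qc z) (hqw : ∀ t h z, 0 ≤ qw t h z)
    (hqv : ∀ t h z, 0 ≤ qv t h z) (z : Zc × (Fin T → Zw) × (Fin T → Zv)) :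
    0 ≤ seqQ qc qw qv z :=
  mul_nonneg (mul_nonneg (hqc _) (arProdLE_nonneg hqw _ _)) (arProdLE_nonneg hqv _ _)

theorem seqG_nonneg (hpc : ∀ z, 0 ≤ pc z) (hpw : ∀ t h z, 0 ≤ pw t h z)
    (hpv : ∀ t h z, 0 ≤ pv t h z) (hf : ∀ t zc zw, 0 ≤ f t zc zw)
    (hg : ∀ t zc zv, 0 ≤ g t zc zv) (z : Zc × (Fin T → Zw) × (Fin T → Zv)) :
    0 ≤ seqG pc pw pv f g z := by
  unfold seqG
  have := arProdLE_nonneg hpw le_rfl z.2.1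
  have := arProdLE_nonneg hpv le_rfl z.2.2
  have := hpc z.1
  have : 0 ≤ ∏ t, f t z.1 (z.2.1 t) := Finset.prod_nonneg fun t _ => hf _ _ _
  have : 0 ≤ ∏ t, g t z.1 (z.2.2 t) := Finset.prod_nonneg fun t _ => hg _ _ _
  positivity

theorem log_seqQ_div_seqG {z : Zc × (Fin T → Zw) × (Fin T → Zv)} (hQ : seqQ qc qw qv z ≠ 0)
    (hG : seqG pc pw pv f g z ≠ 0) :
    Real.log (seqQ qc qw qv z / seqG pc pw pv f g z)
      = Real.log (qc z.1 / pc z.1)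
        + ∑ t : Fin T, condLogRatio qw pw t (Fin.take _ t.isLt z.2.1)
        + ∑ t : Fin T, condLogRatio qv pv t (Fin.take _ t.isLt z.2.2)
        - ∑ t : Fin T, (Real.log (f t z.1 (z.2.1 t)) + Real.log (g t z.1 (z.2.2 t))) := by
  simp only [seqQ, seqG, mul_ne_zero_iff] at hQ hG
  obtain ⟨⟨hqc, hqw⟩, hqv⟩ := hQ
  obtain ⟨⟨⟨⟨hpc, hpw⟩, hpv⟩, hf⟩, hg⟩ := hG
  have hsplit : seqQ qc qw qv z / seqG pc pw pv f g z
      = qc z.1 / pc z.1 * (arProdLE qw le_rfl z.2.1 / arProdLE pw le_rfl z.2.1)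
        * (arProdLE qv le_rfl z.2.2 / arProdLE pv le_rfl z.2.2)
        / ((∏ t, f t z.1 (z.2.1 t)) * ∏ t, g t z.1 (z.2.2 t)) := by
    simp only [seqQ, seqG]
    ring
  rw [hsplit, Real.log_div (by positivity) (mul_ne_zero hf hg), Real.log_mul (by positivity)
      (div_ne_zero hqv hpv), Real.log_mul (div_ne_zero hqc hpc) (div_ne_zero hqw hpw),
    log_arProdLE_div hqw hpw, log_arProdLE_div hqv hpv, Real.log_mul hf hg,
    Real.log_prod fun t _ => Finset.prod_ne_zero_iff.1 hf t (Finset.mem_univ t),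
    Real.log_prod fun t _ => Finset.prod_ne_zero_iff.1 hg t (Finset.mem_univ t),
    Finset.sum_add_distrib]

theorem seqQ_mul_add_eq (a : Zc → ℝ) (b : (Fin T → Zw) → ℝ) (c : (Fin T → Zv) → ℝ)
    (z : Zc × (Fin T → Zw) × (Fin T → Zv)) :
    seqQ qc qw qv z * (a z.1 + b z.2.1 + c z.2.2)
      = qc z.1 * a z.1 * arProdLE qw le_rfl z.2.1 * arProdLE qv le_rfl z.2.2
        + qc z.1 * (arProdLE qw le_rfl z.2.1 * b z.2.1) * arProdLE qv le_rfl z.2.2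
        + qc z.1 * arProdLE qw le_rfl z.2.1 * (arProdLE qv le_rfl z.2.2 * c z.2.2) := by
  simp only [seqQ]
  ring

variable [MeasurableSpace Zc] [MeasurableSpace Zw] [MeasurableSpace Zv]
  {μc : Measure Zc} {μw : Measure Zw} {μv : Measure Zv}
  [SigmaFinite μw] [SigmaFinite μv]

theorem integrable_seqQ_mul_add (hqc : ∫ z, qc z ∂μc = 1)
    (hqw : ∀ t, IsCondDensity μw (qw t)) (hqv : ∀ t, IsCondDensity μv (qv t))
    {a : Zc → ℝ} {b : (Fin T → Zw) → ℝ} {c : (Fin T → Zv) → ℝ}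
    (ha : Integrable (fun x => qc x * a x) μc)
    (hb : Integrable (fun w => arProdLE qw le_rfl w * b w) (Measure.pi fun _ => μw))
    (hc : Integrable (fun v => arProdLE qv le_rfl v * c v) (Measure.pi fun _ => μv)) :
    Integrable (fun z => seqQ qc qw qv z * (a z.1 + b z.2.1 + c z.2.2))
      (μc.prod ((Measure.pi fun _ => μw).prod (Measure.pi fun _ => μv))) := by
  have hqc_int := integrable_of_integral_eq_one hqc
  have hqw_int := integrable_of_integral_eq_one (integral_arProdLE hqw le_rfl)
  have hqv_int := integrable_of_integral_eq_one (integral_arProdLE hqv le_rfl)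
  simp_rw [seqQ_mul_add_eq]
  exact ((integrable_prod_mul₃ ha hqw_int hqv_int).add
    (integrable_prod_mul₃ hqc_int hb hqv_int)).add (integrable_prod_mul₃ hqc_int hqw_int hc)

variable [SigmaFinite μc]

theorem integral_seqQ (hqc : ∫ z, qc z ∂μc = 1) (hqw : ∀ t, IsCondDensity μw (qw t))
    (hqv : ∀ t, IsCondDensity μv (qv t)) :
    ∫ z, seqQ qc qw qv z ∂(μc.prod ((Measure.pi fun _ => μw).prod (Measure.pi fun _ => μv)))
      = 1 := by
  unfold seqQ
  rw [integral_prod_mul₃, hqc, integral_arProdLE hqw, integral_arProdLE hqv]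
  ring

theorem integral_seqQ_mul_add (hqc : ∫ z, qc z ∂μc = 1) (hqw : ∀ t, IsCondDensity μw (qw t))
    (hqv : ∀ t, IsCondDensity μv (qv t)) {a : Zc → ℝ} {b : (Fin T → Zw) → ℝ}
    {c : (Fin T → Zv) → ℝ} (ha : Integrable (fun x => qc x * a x) μc)
    (hb : Integrable (fun w => arProdLE qw le_rfl w * b w) (Measure.pi fun _ => μw))
    (hc : Integrable (fun v => arProdLE qv le_rfl v * c v) (Measure.pi fun _ => μv)) :
    ∫ z, seqQ qc qw qv z * (a z.1 + b z.2.1 + c z.2.2)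
        ∂(μc.prod ((Measure.pi fun _ => μw).prod (Measure.pi fun _ => μv)))
      = ∫ x, qc x * a x ∂μc + ∫ w, arProdLE qw le_rfl w * b w ∂(Measure.pi fun _ => μw)
        + ∫ v, arProdLE qv le_rfl v * c v ∂(Measure.pi fun _ => μv) := by
  have hqc_int := integrable_of_integral_eq_one hqc
  have hqw_one := integral_arProdLE hqw le_rfl
  have hqv_one := integral_arProdLE hqv le_rfl
  have hqw_int := integrable_of_integral_eq_one hqw_one
  have hqv_int := integrable_of_integral_eq_one hqv_one
  have ha' := integrable_prod_mul₃ ha hqw_int hqv_int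
  have hb' := integrable_prod_mul₃ hqc_int hb hqv_int
  simp_rw [seqQ_mul_add_eq]
  rw [integral_add (ha'.fun_add hb') (integrable_prod_mul₃ hqc_int hqw_int hc),
    integral_add ha' hb',
    integral_prod_mul₃ (fun x => qc x * a x), integral_prod_mul₃ qc (fun w => _ * b w),
    integral_prod_mul₃ qc _ (fun v => _ * c v), hqc, hqw_one, hqv_one]
  ring

theorem integral_seqQ_mul_log_div_seqG (hqc : ∫ z, qc z ∂μc = 1)
    (hqw : ∀ t, IsCondDensity μw (qw t)) (hqv : ∀ t, IsCondDensity μv (qv t))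
    (hG : ∀ᵐ z ∂(μc.prod ((Measure.pi fun _ => μw).prod (Measure.pi fun _ => μv))),
      seqQ qc qw qv z ≠ 0 → seqG pc pw pv f g z ≠ 0)
    (hklc : Integrable (fun x => qc x * Real.log (qc x / pc x)) μc)
    (hklw : ∀ t : Fin T, Integrable (fun y => arProdLE qw t.isLt y * condLogRatio qw pw t y)
      (Measure.pi fun _ => μw))
    (hklv : ∀ t : Fin T, Integrable (fun y => arProdLE qv t.isLt y * condLogRatio qv pv t y)
      (Measure.pi fun _ => μv))
    (hrec : ∀ t, Integrable (fun z => seqQ qc qw qv z *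
      (Real.log (f t z.1 (z.2.1 t)) + Real.log (g t z.1 (z.2.2 t))))
      (μc.prod ((Measure.pi fun _ => μw).prod (Measure.pi fun _ => μv)))) :
    ∫ z, seqQ qc qw qv z * Real.log (seqQ qc qw qv z / seqG pc pw pv f g z)
        ∂(μc.prod ((Measure.pi fun _ => μw).prod (Measure.pi fun _ => μv)))
      = ∫ x, qc x * Real.log (qc x / pc x) ∂μc
        + ∑ t : Fin T,
            ∫ y, arProdLE qw t.isLt y * condLogRatio qw pw t y ∂(Measure.pi fun _ => μw)
        + ∑ t : Fin T,
            ∫ y, arProdLE qv t.isLt y * condLogRatio qv pv t y ∂(Measure.pi fun _ => μv)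
        - ∑ t : Fin T, ∫ z, seqQ qc qw qv z *
            (Real.log (f t z.1 (z.2.1 t)) + Real.log (g t z.1 (z.2.2 t)))
            ∂(μc.prod ((Measure.pi fun _ => μw).prod (Measure.pi fun _ => μv))) := by
  have hb := integrable_arProdLE_mul_sum_condLogRatio hqw hklw
  have hc := integrable_arProdLE_mul_sum_condLogRatio hqv hklv
  have hae : (fun z => seqQ qc qw qv z * Real.log (seqQ qc qw qv z / seqG pc pw pv f g z))
      =ᵐ[μc.prod ((Measure.pi fun _ => μw).prod (Measure.pi fun _ => μv))] fun z =>
        seqQ qc qw qv z * (Real.log (qc z.1 / pc z.1)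
          + ∑ t : Fin T, condLogRatio qw pw t (Fin.take _ t.isLt z.2.1)
          + ∑ t : Fin T, condLogRatio qv pv t (Fin.take _ t.isLt z.2.2))
        - ∑ t : Fin T, seqQ qc qw qv z *
          (Real.log (f t z.1 (z.2.1 t)) + Real.log (g t z.1 (z.2.2 t))) := by
    filter_upwards [hG] with z hz
    by_cases hQ : seqQ qc qw qv z = 0
    · simp [hQ]
    rw [log_seqQ_div_seqG hQ (hz hQ), ← Finset.mul_sum]
    ring
  rw [integral_congr_ae hae, integral_sub (integrable_seqQ_mul_add hqc hqw hqv hklc hb hc)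
      (integrable_finsetSum _ fun t _ => hrec t), integral_seqQ_mul_add hqc hqw hqv hklc hb hc,
    integral_arProdLE_mul_sum_condLogRatio hqw hklw,
    integral_arProdLE_mul_sum_condLogRatio hqv hklv,
    integral_finsetSum _ fun t _ => hrec t]

end Model

theorem nonstationary_elbo_general
    {Zc Zw Zv : Type*} [MeasurableSpace Zc] [MeasurableSpace Zw] [MeasurableSpace Zv]
    (μc : Measure Zc) (μw : Measure Zw) (μv : Measure Zv)
    [SigmaFinite μc] [SigmaFinite μw] [SigmaFinite μv] (T : ℕ)
    (pc qc : Zc → ℝ)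
    (pw qw : (t : Fin T) → (Fin (t : ℕ) → Zw) → Zw → ℝ)
    (pv qv : (t : Fin T) → (Fin (t : ℕ) → Zv) → Zv → ℝ)
    (f : Fin T → Zc → Zw → ℝ) (g : Fin T → Zc → Zv → ℝ)
    (hpc_nonneg : ∀ z, 0 ≤ pc z)
    (hqc_nonneg : ∀ z, 0 ≤ qc z) (hqc_norm : ∫ z, qc z ∂μc = 1)
    (hpw_nonneg : ∀ t h z, 0 ≤ pw t h z)
    (hqw_meas : ∀ t, Measurable (Function.uncurry (qw t)))
    (hqw_nonneg : ∀ t h z, 0 ≤ qw t h z) (hqw_norm : ∀ t h, ∫ z, qw t h z ∂μw = 1)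
    (hpv_nonneg : ∀ t h z, 0 ≤ pv t h z)
    (hqv_meas : ∀ t, Measurable (Function.uncurry (qv t)))
    (hqv_nonneg : ∀ t h z, 0 ≤ qv t h z) (hqv_norm : ∀ t h, ∫ z, qv t h z ∂μv = 1)
    (hf_nonneg : ∀ t zc zw, 0 ≤ f t zc zw)
    (hg_nonneg : ∀ t zc zv, 0 ≤ g t zc zv)
    (ν : Measure (Zc × (Fin T → Zw) × (Fin T → Zv)))
    (hν : ν = μc.prod ((Measure.pi fun _ => μw).prod (Measure.pi fun _ => μv)))
    (m : ℝ) (hm : m = ∫ z, seqG pc pw pv f g z ∂ν) (hm_pos : 0 < m)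
    (h_pos : ∀ᵐ z ∂ν, 0 < seqQ qc qw qv z → 0 < seqG pc pw pv f g z)
    (hQG_int : Integrable
        (fun z => seqQ qc qw qv z *
          Real.log (seqQ qc qw qv z / seqG pc pw pv f g z)) ν)
    (hf_int : ∀ t, Integrable
        (fun z => seqQ qc qw qv z * Real.log (f t z.1 (z.2.1 t))) ν)
    (hg_int : ∀ t, Integrable
        (fun z => seqQ qc qw qv z * Real.log (g t z.1 (z.2.2 t))) ν)
    (hklc_int : Integrable (fun z => qc z * Real.log (qc z / pc z)) μc)
    (hklw_int : ∀ t : Fin T, Integrable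
        (fun z : Fin ((t : ℕ) + 1) → Zw =>
          arProdLE qw t.isLt z *
            Real.log (qw t (fun r => z r.castSucc) (z (Fin.last _)) /
                      pw t (fun r => z r.castSucc) (z (Fin.last _))))
        (Measure.pi fun _ => μw))
    (hklv_int : ∀ t : Fin T, Integrable
        (fun z : Fin ((t : ℕ) + 1) → Zv =>
          arProdLE qv t.isLt z *
            Real.log (qv t (fun r => z r.castSucc) (z (Fin.last _)) /
                      pv t (fun r => z r.castSucc) (z (Fin.last _))))
        (Measure.pi fun _ => μv)) :
    Real.log m
      ≥ (∑ t : Fin T, ∫ z, seqQ qc qw qv z *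
            (Real.log (f t z.1 (z.2.1 t)) + Real.log (g t z.1 (z.2.2 t))) ∂ν)
        - (∫ z, qc z * Real.log (qc z / pc z) ∂μc)
        - (∑ t : Fin T, ∫ z : Fin ((t : ℕ) + 1) → Zw,
            arProdLE qw t.isLt z *
              Real.log (qw t (fun r => z r.castSucc) (z (Fin.last _)) /
                        pw t (fun r => z r.castSucc) (z (Fin.last _)))
            ∂(Measure.pi fun _ => μw))
        - (∑ t : Fin T, ∫ z : Fin ((t : ℕ) + 1) → Zv,
            arProdLE qv t.isLt z *
              Real.log (qv t (fun r => z r.castSucc) (z (Fin.last _)) /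
                        pv t (fun r => z r.castSucc) (z (Fin.last _)))
            ∂(Measure.pi fun _ => μv)) := by
  subst hν hm
  have hqw : ∀ t, IsCondDensity μw (qw t) := fun t => ⟨hqw_meas t, hqw_nonneg t, hqw_norm t⟩
  have hqv : ∀ t, IsCondDensity μv (qv t) := fun t => ⟨hqv_meas t, hqv_nonneg t, hqv_norm t⟩
  have hQ_nonneg := seqQ_nonneg hqc_nonneg hqw_nonneg hqv_nonneg
  have hG_nonneg := seqG_nonneg hpc_nonneg hpw_nonneg hpv_nonneg hf_nonneg hg_nonneg
  have hgibbs := neg_integral_mul_log_div_le_log_integral (ae_of_all _ hQ_nonneg)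
    (integral_seqQ hqc_norm hqw hqv) (ae_of_all _ hG_nonneg) hm_pos h_pos hQG_int
  have hdecomp := integral_seqQ_mul_log_div_seqG hqc_norm hqw hqv
    (h_pos.mono fun z hz hQ => (hz ((hQ_nonneg z).lt_of_ne' hQ)).ne') hklc_int hklw_int hklv_int
    fun t => by simpa only [mul_add] using (hf_int t).fun_add (hg_int t)
  unfold condLogRatio at hdecomp
  linarith

/-- **Theorem 2 of the paper: non-stationary ELBO.**
With static latent `z_c` (prior `p_c`, posterior `q_c`), two Markov chains of dynamic
latents with conditional priors `p^w_t, p^v_t` and conditional posteriors `q^w_t, q^v_t`,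
per-time-step likelihood factors `f_t, g_t` of the fixed observed sequences, and marginal
likelihood `m = ∫ G` with `0 < m < ∞` (finiteness expressed by integrability of `G`),
the log-likelihood `log m` of the observed sequences is bounded below by the LSSAE
objective: the reconstruction terms minus `KL(q_c‖p_c)` minus the summed expected
conditional KL divergences of the two chains. -/
theorem nonstationary_elbo
    {Zc Zw Zv : Type*} [MeasurableSpace Zc] [MeasurableSpace Zw] [MeasurableSpace Zv]
    (μc : Measure Zc) (μw : Measure Zw) (μv : Measure Zv)
    [SigmaFinite μc] [SigmaFinite μw] [SigmaFinite μv] (T : ℕ)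
    (pc qc : Zc → ℝ)
    (pw qw : (t : Fin T) → (Fin (t : ℕ) → Zw) → Zw → ℝ)
    (pv qv : (t : Fin T) → (Fin (t : ℕ) → Zv) → Zv → ℝ)
    (f : Fin T → Zc → Zw → ℝ) (g : Fin T → Zc → Zv → ℝ)
    (hpc_meas : Measurable pc) (hpc_nonneg : ∀ z, 0 ≤ pc z) (hpc_norm : ∫ z, pc z ∂μc = 1)
    (hqc_meas : Measurable qc) (hqc_nonneg : ∀ z, 0 ≤ qc z) (hqc_norm : ∫ z, qc z ∂μc = 1)
    (hpw_meas : ∀ t, Measurable (Function.uncurry (pw t)))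
    (hpw_nonneg : ∀ t h z, 0 ≤ pw t h z) (hpw_norm : ∀ t h, ∫ z, pw t h z ∂μw = 1)
    (hqw_meas : ∀ t, Measurable (Function.uncurry (qw t)))
    (hqw_nonneg : ∀ t h z, 0 ≤ qw t h z) (hqw_norm : ∀ t h, ∫ z, qw t h z ∂μw = 1)
    (hpv_meas : ∀ t, Measurable (Function.uncurry (pv t)))
    (hpv_nonneg : ∀ t h z, 0 ≤ pv t h z) (hpv_norm : ∀ t h, ∫ z, pv t h z ∂μv = 1)
    (hqv_meas : ∀ t, Measurable (Function.uncurry (qv t)))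
    (hqv_nonneg : ∀ t h z, 0 ≤ qv t h z) (hqv_norm : ∀ t h, ∫ z, qv t h z ∂μv = 1)
    (hf_meas : ∀ t, Measurable (Function.uncurry (f t))) (hf_nonneg : ∀ t zc zw, 0 ≤ f t zc zw)
    (hg_meas : ∀ t, Measurable (Function.uncurry (g t))) (hg_nonneg : ∀ t zc zv, 0 ≤ g t zc zv)
    (ν : Measure (Zc × (Fin T → Zw) × (Fin T → Zv)))
    (hν : ν = μc.prod ((Measure.pi fun _ => μw).prod (Measure.pi fun _ => μv)))
    (hG_int : Integrable (seqG pc pw pv f g) ν)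
    (m : ℝ) (hm : m = ∫ z, seqG pc pw pv f g z ∂ν) (hm_pos : 0 < m)
    (h_pos : ∀ᵐ z ∂ν, 0 < seqQ qc qw qv z → 0 < seqG pc pw pv f g z)
    (hQG_int : Integrable
        (fun z => seqQ qc qw qv z *
          Real.log (seqQ qc qw qv z / seqG pc pw pv f g z)) ν)
    (hf_int : ∀ t, Integrable
        (fun z => seqQ qc qw qv z * Real.log (f t z.1 (z.2.1 t))) ν)
    (hg_int : ∀ t, Integrable
        (fun z => seqQ qc qw qv z * Real.log (g t z.1 (z.2.2 t))) ν)
    (hklc_int : Integrable (fun z => qc z * Real.log (qc z / pc z)) μc)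
    (hklw_int : ∀ t : Fin T, Integrable
        (fun z : Fin ((t : ℕ) + 1) → Zw =>
          arProdLE qw t.isLt z *
            Real.log (qw t (fun r => z r.castSucc) (z (Fin.last _)) /
                      pw t (fun r => z r.castSucc) (z (Fin.last _))))
        (Measure.pi fun _ => μw))
    (hklv_int : ∀ t : Fin T, Integrable
        (fun z : Fin ((t : ℕ) + 1) → Zv =>
          arProdLE qv t.isLt z *
            Real.log (qv t (fun r => z r.castSucc) (z (Fin.last _)) /
                      pv t (fun r => z r.castSucc) (z (Fin.last _))))
        (Measure.pi fun _ => μv)) :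
    Real.log m
      ≥ (∑ t : Fin T, ∫ z, seqQ qc qw qv z *
            (Real.log (f t z.1 (z.2.1 t)) + Real.log (g t z.1 (z.2.2 t))) ∂ν)
        - (∫ z, qc z * Real.log (qc z / pc z) ∂μc)
        - (∑ t : Fin T, ∫ z : Fin ((t : ℕ) + 1) → Zw,
            arProdLE qw t.isLt z *
              Real.log (qw t (fun r => z r.castSucc) (z (Fin.last _)) /
                        pw t (fun r => z r.castSucc) (z (Fin.last _)))
            ∂(Measure.pi fun _ => μw))
        - (∑ t : Fin T, ∫ z : Fin ((t : ℕ) + 1) → Zv,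
            arProdLE qv t.isLt z *
              Real.log (qv t (fun r => z r.castSucc) (z (Fin.last _)) /
                        pv t (fun r => z r.castSucc) (z (Fin.last _)))
            ∂(Measure.pi fun _ => μv)) :=
  nonstationary_elbo_general μc μw μv T pc qc pw qw pv qv f g hpc_nonneg hqc_nonneg hqc_norm
    hpw_nonneg hqw_meas hqw_nonneg hqw_norm hpv_nonneg hqv_meas hqv_nonneg hqv_norm hf_nonneg
    hg_nonneg ν hν m hm hm_pos h_pos hQG_int hf_int hg_int hklc_int hklw_int hklv_int
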